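/- Let C be the dual-pivot quickselect cost array defined from the 'smaller pivot first' partitioning costs P^sf by the standard recurrence, and let C̄(n) = (1/n)·∑_{j=1}^n C(n,j) be the grand average. Then for every n ≥ 4, C̄(n) = (10/3)·n − (44/5)·H_n + 354/25 − (44/5)·H_n/n + 2/(75·n). -/
import Mathlib


open Finset

/-- Harmonic numbers `H_n = ∑_{k=1}^n 1/k`. -/
noncomputable def H (n : ℕ) : ℝ := ∑ k ∈ Finset.Icc 1 n, (1 : ℝ) / k

/-- Alternating harmonic numbers `H^alt_n = ∑_{k=1}^n (-1)^k/k`. -/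
noncomputable def Halt (n : ℕ) : ℝ := ∑ k ∈ Finset.Icc 1 n, (-1 : ℝ) ^ k / k

/-- The dual-pivot quickselect cost array defined from expected partitioning
costs `P` by the standard recurrence:  `C(n,j) = 0` whenever `n ≤ 1` or `j < 1`
or `j > n`; and for `n ≥ 2` and `1 ≤ j ≤ n`,
`C(n,j) = P(n) + (2/(n(n−1)))·( ∑_{s=j}^{n−2} (n−1−s)·C(s,j)
  + ∑_{m=1}^{n−2} ∑_{s=max(0,j−m−1)}^{min(j−2, n−m−2)} C(m, j−s−1)
  + ∑_{ℓ=n−j+1}^{n−2} (n−1−ℓ)·C(ℓ, n−j+1) )`.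
(The `attach` is only needed for the termination proof.) -/
noncomputable def qsCost (P : ℕ → ℝ) : ℕ → ℤ → ℝ
  | n, j =>
    if n ≤ 1 ∨ j < 1 ∨ (n : ℤ) < j then 0
    else
      P n + 2 / ((n : ℝ) * ((n : ℝ) - 1)) *
        ((∑ s ∈ (Finset.Icc j.toNat (n - 2)).attach,
            ((n : ℝ) - 1 - (s : ℕ)) * qsCost P (s : ℕ) j) +
         (∑ m ∈ (Finset.Icc 1 (n - 2)).attach,
            ∑ s ∈ Finset.Icc (max 0 (j - ((m : ℕ) : ℤ) - 1))
                (min (j - 2) ((n : ℤ) - ((m : ℕ) : ℤ) - 2)),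
              qsCost P (m : ℕ) (j - s - 1)) +
         (∑ l ∈ (Finset.Icc ((n : ℤ) - j + 1).toNat (n - 2)).attach,
            ((n : ℝ) - 1 - (l : ℕ)) * qsCost P (l : ℕ) ((n : ℤ) - j + 1)))
  termination_by n j => n
  decreasing_by
    · have hs := s.2; simp only [Finset.mem_Icc] at hs; omega
    · have hm := m.2; simp only [Finset.mem_Icc] at hm; omega
    · have hl := l.2; simp only [Finset.mem_Icc] at hl; omega

/-- Expected partitioning costs of the strategy "smaller pivot first":
`P^sf(0) = P^sf(1) = 0` and `P^sf(n) = (5/3)n − 7/3` for `n ≥ 2`. -/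
noncomputable def Psf (n : ℕ) : ℝ := if n ≤ 1 then 0 else 5 / 3 * (n : ℝ) - 7 / 3

/-- sum over ℤ-interval equals sum over ℕ-interval -/
lemma sfSumInt (b : ℕ) (f : ℤ → ℝ) :
    ∑ j ∈ Finset.Icc (1 : ℤ) (b : ℤ), f j = ∑ j ∈ Finset.Icc 1 b, f (j : ℤ) := by
  refine Finset.sum_nbij' (i := fun j => j.toNat) (j := fun j => (j : ℤ)) ?_ ?_ ?_ ?_ ?_
  · intro x hx; simp only [Finset.mem_Icc] at hx ⊢; omega
  · intro x hx; simp only [Finset.mem_Icc] at hx ⊢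
    show (1 : ℤ) ≤ (x : ℤ) ∧ (x : ℤ) ≤ (b : ℤ); omega
  · intro x hx; simp only [Finset.mem_Icc] at hx
    exact Int.toNat_of_nonneg (by omega)
  · intro x hx; simp
  · intro x hx; simp only [Finset.mem_Icc] at hx
    exact congrArg f (Int.toNat_of_nonneg (by omega)).symm

noncomputable def sfS (n : ℕ) : ℝ := ∑ j ∈ Finset.Icc (1 : ℤ) (n : ℤ), qsCost Psf n j

lemma sfS_of_le_one (n : ℕ) (h : n ≤ 1) : sfS n = 0 := by
  refine Finset.sum_eq_zero fun j hj => ?_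
  rw [qsCost, if_pos (Or.inl h)]

lemma qsCost_eq (n : ℕ) (j : ℤ) (hn : 2 ≤ n) (h1 : 1 ≤ j) (h2 : j ≤ (n : ℤ)) :
    qsCost Psf n j =
      Psf n + 2 / ((n : ℝ) * ((n : ℝ) - 1)) *
        ((∑ s ∈ Finset.Icc j.toNat (n - 2), ((n : ℝ) - 1 - (s : ℕ)) * qsCost Psf s j) +
         (∑ m ∈ Finset.Icc 1 (n - 2),
            ∑ s ∈ Finset.Icc (max 0 (j - (m : ℤ) - 1)) (min (j - 2) ((n : ℤ) - (m : ℤ) - 2)),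
              qsCost Psf m (j - s - 1)) +
         (∑ l ∈ Finset.Icc ((n : ℤ) - j + 1).toNat (n - 2),
            ((n : ℝ) - 1 - (l : ℕ)) * qsCost Psf l ((n : ℤ) - j + 1))) := by
  rw [qsCost, if_neg (by omega)]
  rw [Finset.sum_attach (Finset.Icc j.toNat (n - 2)) (fun s => ((n : ℝ) - 1 - (s : ℕ)) * qsCost Psf s j),
    Finset.sum_attach (Finset.Icc 1 (n - 2)) (fun m => ∑ s ∈ Finset.Icc (max 0 (j - (m : ℤ) - 1)) (min (j - 2) ((n : ℤ) - (m : ℤ) - 2)), qsCost Psf m (j - s - 1)),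
    Finset.sum_attach (Finset.Icc ((n : ℤ) - j + 1).toNat (n - 2)) (fun l => ((n : ℝ) - 1 - (l : ℕ)) * qsCost Psf l ((n : ℤ) - j + 1))]

lemma sfS_rec (n : ℕ) (hn : 2 ≤ n) :
    sfS n = (n : ℝ) * Psf n + 6 / ((n : ℝ) * ((n : ℝ) - 1)) *
      ∑ m ∈ Finset.Icc 1 (n - 2), ((n : ℝ) - 1 - (m : ℕ)) * sfS m := by
  have hA : ∑ j ∈ Finset.Icc (1 : ℤ) (n : ℤ),
      ∑ s ∈ Finset.Icc j.toNat (n - 2), ((n : ℝ) - 1 - (s : ℕ)) * qsCost Psf s j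
      = ∑ m ∈ Finset.Icc 1 (n - 2), ((n : ℝ) - 1 - (m : ℕ)) * sfS m := by
    rw [sfSumInt n]
    have e1 : ∀ j ∈ Finset.Icc 1 n,
        (∑ s ∈ Finset.Icc ((j : ℤ)).toNat (n - 2), ((n : ℝ) - 1 - (s : ℕ)) * qsCost Psf s (j : ℤ))
        = ∑ s ∈ Finset.Icc j (n - 2), ((n : ℝ) - 1 - (s : ℕ)) * qsCost Psf s (j : ℤ) := by
      intro j hj; rw [Int.toNat_natCast]
    rw [Finset.sum_congr rfl e1]
    rw [Finset.sum_comm' (s' := fun s => Finset.Icc 1 s) (t' := Finset.Icc 1 (n - 2))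
      (by intro x y; simp only [Finset.mem_Icc]; omega)]
    refine Finset.sum_congr rfl fun s hs => ?_
    rw [← Finset.mul_sum, sfS, sfSumInt s]
  have hD : ∑ j ∈ Finset.Icc (1 : ℤ) (n : ℤ),
      ∑ l ∈ Finset.Icc ((n : ℤ) - j + 1).toNat (n - 2),
        ((n : ℝ) - 1 - (l : ℕ)) * qsCost Psf l ((n : ℤ) - j + 1)
      = ∑ m ∈ Finset.Icc 1 (n - 2), ((n : ℝ) - 1 - (m : ℕ)) * sfS m := by
    rw [← hA]
    refine Finset.sum_nbij' (i := fun j => (n : ℤ) - j + 1) (j := fun j => (n : ℤ) - j + 1)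
      ?_ ?_ ?_ ?_ ?_
    · intro x hx; simp only [Finset.mem_Icc] at hx ⊢
      show (1 : ℤ) ≤ (n : ℤ) - x + 1 ∧ (n : ℤ) - x + 1 ≤ (n : ℤ); omega
    · intro x hx; simp only [Finset.mem_Icc] at hx ⊢
      show (1 : ℤ) ≤ (n : ℤ) - x + 1 ∧ (n : ℤ) - x + 1 ≤ (n : ℤ); omega
    · intro x hx; show (n : ℤ) - ((n : ℤ) - x + 1) + 1 = x; ring
    · intro x hx; show (n : ℤ) - ((n : ℤ) - x + 1) + 1 = x; ring
    · intro x hx; rfl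
  have hBm : ∀ m ∈ Finset.Icc 1 (n - 2),
      (∑ j ∈ Finset.Icc (1 : ℤ) (n : ℤ),
        ∑ s ∈ Finset.Icc (max 0 (j - (m : ℤ) - 1)) (min (j - 2) ((n : ℤ) - (m : ℤ) - 2)),
          qsCost Psf m (j - s - 1)) = ((n : ℝ) - 1 - (m : ℕ)) * sfS m := by
    intro m hm
    simp only [Finset.mem_Icc] at hm
    have hconst : ∑ r ∈ Finset.Icc (1 : ℤ) (m : ℤ),
        ∑ _s ∈ Finset.Icc (0 : ℤ) ((n : ℤ) - (m : ℤ) - 2), qsCost Psf m r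
        = ((n : ℝ) - 1 - (m : ℕ)) * sfS m := by
      have hcard : (Finset.Icc (0 : ℤ) ((n : ℤ) - (m : ℤ) - 2)).card = n - m - 1 := by
        rw [Int.card_Icc]; omega
      have e1 : ∀ r ∈ Finset.Icc (1 : ℤ) (m : ℤ),
          (∑ _s ∈ Finset.Icc (0 : ℤ) ((n : ℤ) - (m : ℤ) - 2), qsCost Psf m r)
          = ((n - m - 1 : ℕ) : ℝ) * qsCost Psf m r := by
        intro r _hr; rw [Finset.sum_const, hcard, nsmul_eq_mul]
      rw [Finset.sum_congr rfl e1, ← Finset.mul_sum]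
      have : ((n - m - 1 : ℕ) : ℝ) = (n : ℝ) - 1 - (m : ℕ) := by
        have h1 : m + 1 ≤ n := by omega
        rw [show n - m - 1 = n - (m + 1) from rfl, Nat.cast_sub h1]
        push_cast; ring
      rw [this, sfS]
    rw [← hconst,
      Finset.sum_sigma' (Finset.Icc (1 : ℤ) (n : ℤ))
        (fun j => Finset.Icc (max 0 (j - (m : ℤ) - 1)) (min (j - 2) ((n : ℤ) - (m : ℤ) - 2)))
        (fun j s => qsCost Psf m (j - s - 1)),
      Finset.sum_sigma' (Finset.Icc (1 : ℤ) (m : ℤ))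
        (fun _r => Finset.Icc (0 : ℤ) ((n : ℤ) - (m : ℤ) - 2))
        (fun r _s => qsCost Psf m r)]
    refine Finset.sum_nbij' (i := fun p => ⟨p.1 - p.2 - 1, p.2⟩)
      (j := fun p => ⟨p.1 + p.2 + 1, p.2⟩) ?_ ?_ ?_ ?_ ?_
    · intro p hp; simp only [Finset.mem_sigma, Finset.mem_Icc] at hp ⊢; omega
    · intro p hp; simp only [Finset.mem_sigma, Finset.mem_Icc] at hp ⊢; omega
    · intro p hp; rcases p with ⟨a, b⟩; show (⟨a - b - 1 + b + 1, b⟩ : (_ : ℤ) × ℤ) = ⟨a, b⟩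
      congr 1; ring
    · intro p hp; rcases p with ⟨a, b⟩; show (⟨a + b + 1 - b - 1, b⟩ : (_ : ℤ) × ℤ) = ⟨a, b⟩
      congr 1; ring
    · intro p hp; rfl
  have hB : ∑ j ∈ Finset.Icc (1 : ℤ) (n : ℤ), ∑ m ∈ Finset.Icc 1 (n - 2),
      ∑ s ∈ Finset.Icc (max 0 (j - (m : ℤ) - 1)) (min (j - 2) ((n : ℤ) - (m : ℤ) - 2)),
        qsCost Psf m (j - s - 1)
      = ∑ m ∈ Finset.Icc 1 (n - 2), ((n : ℝ) - 1 - (m : ℕ)) * sfS m := by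
    rw [Finset.sum_comm]; exact Finset.sum_congr rfl hBm
  have hsplit : sfS n = ∑ j ∈ Finset.Icc (1 : ℤ) (n : ℤ),
      (Psf n + 2 / ((n : ℝ) * ((n : ℝ) - 1)) *
        ((∑ s ∈ Finset.Icc j.toNat (n - 2), ((n : ℝ) - 1 - (s : ℕ)) * qsCost Psf s j) +
         (∑ m ∈ Finset.Icc 1 (n - 2),
            ∑ s ∈ Finset.Icc (max 0 (j - (m : ℤ) - 1)) (min (j - 2) ((n : ℤ) - (m : ℤ) - 2)),
              qsCost Psf m (j - s - 1)) +
         (∑ l ∈ Finset.Icc ((n : ℤ) - j + 1).toNat (n - 2),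
            ((n : ℝ) - 1 - (l : ℕ)) * qsCost Psf l ((n : ℤ) - j + 1)))) :=
    Finset.sum_congr rfl fun j hj => by
      simp only [Finset.mem_Icc] at hj; exact qsCost_eq n j hn hj.1 hj.2
  rw [hsplit, Finset.sum_add_distrib, Finset.sum_const, Int.card_Icc, ← Finset.mul_sum,
    Finset.sum_add_distrib, Finset.sum_add_distrib, hA, hB, hD]
  have hcn : ((n : ℤ) + 1 - 1).toNat = n := by omega
  rw [hcn, nsmul_eq_mul]
  ring

noncomputable def sfG (k : ℕ) : ℝ := ∑ m ∈ Finset.Icc 1 k, ((k : ℝ) + 1 - (m : ℕ)) * sfS m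

lemma sfS_rec' (k : ℕ) : sfS (k + 2) = ((k : ℝ) + 2) * Psf (k + 2)
    + 6 / (((k : ℝ) + 2) * ((k : ℝ) + 1)) * sfG k := by
  have h := sfS_rec (k + 2) (by omega)
  rw [show k + 2 - 2 = k from by omega] at h
  have e : ∀ m ∈ Finset.Icc 1 k,
      (((k + 2 : ℕ) : ℝ) - 1 - (m : ℕ)) * sfS m = ((k : ℝ) + 1 - (m : ℕ)) * sfS m := by
    intro m _; push_cast; ring
  rw [h, Finset.sum_congr rfl e]
  rw [sfG]; push_cast; ring

lemma sfG_succ (k : ℕ) : sfG (k + 1) = sfG k + ∑ m ∈ Finset.Icc 1 (k + 1), sfS m := by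
  unfold sfG
  rw [Finset.sum_Icc_succ_top (by omega), Finset.sum_Icc_succ_top (by omega)]
  have e : ∀ m ∈ Finset.Icc 1 k,
      (((k + 1 : ℕ) : ℝ) + 1 - (m : ℕ)) * sfS m
        = ((k : ℝ) + 1 - (m : ℕ)) * sfS m + sfS m := by
    intro m _; push_cast; ring
  rw [Finset.sum_congr rfl e, Finset.sum_add_distrib]
  push_cast; ring

lemma sfG_dd (k : ℕ) : sfG (k + 2) = 2 * sfG (k + 1) - sfG k + sfS (k + 2) := by
  have h1 := sfG_succ (k + 1)
  have h2 := sfG_succ k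
  have h3 : ∑ m ∈ Finset.Icc 1 (k + 2), sfS m
      = ∑ m ∈ Finset.Icc 1 (k + 1), sfS m + sfS (k + 2) := Finset.sum_Icc_succ_top (by omega) _
  simp only [show k + 1 + 1 = k + 2 from by omega] at h1
  rw [h1, h2, h3]; ring

lemma sfS_one : sfS 1 = 0 := sfS_of_le_one 1 (by omega)

lemma sfS_two : sfS 2 = 2 := by
  have h := sfS_rec' 0
  rw [show (0:ℕ) + 2 = 2 from rfl] at h
  rw [h, sfG, Psf]
  norm_num

lemma sfS_three : sfS 3 = 8 := by
  have h := sfS_rec' 1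
  rw [show (1:ℕ) + 2 = 3 from rfl] at h
  rw [h, sfG, show Finset.Icc 1 1 = ({1} : Finset ℕ) from by decide, Psf]
  simp [sfS_one]
  norm_num

lemma sfS_four : sfS 4 = 55/3 := by
  have h := sfS_rec' 2
  rw [show (2:ℕ) + 2 = 4 from rfl] at h
  rw [h, sfG, show Finset.Icc 1 2 = ({1, 2} : Finset ℕ) from by decide, Psf]
  rw [Finset.sum_insert (by decide), Finset.sum_singleton]
  rw [sfS_one, sfS_two]
  norm_num

lemma sfS_five : sfS 5 = 168/5 := by
  have h := sfS_rec' 3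
  rw [show (3:ℕ) + 2 = 5 from rfl] at h
  rw [h, sfG, show Finset.Icc 1 3 = ({1, 2, 3} : Finset ℕ) from by decide, Psf]
  rw [Finset.sum_insert (by decide), Finset.sum_insert (by decide), Finset.sum_singleton]
  rw [sfS_one, sfS_two, sfS_three]
  norm_num

lemma H_succ (n : ℕ) : H (n + 1) = H n + 1 / ((n : ℝ) + 1) := by
  rw [H, H, Finset.sum_Icc_succ_top (by omega)]
  push_cast; ring

lemma H_four : H 4 = 25/12 := by
  have h1 : H 1 = 1 := by
    rw [H, show Finset.Icc 1 1 = ({1} : Finset ℕ) from by decide, Finset.sum_singleton]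
    norm_num
  have h2 := H_succ 1
  have h3 := H_succ 2
  have h4 := H_succ 3
  norm_num at h2 h3 h4
  rw [h4, h3, h2, h1]; norm_num

lemma H_five : H 5 = 137/60 := by
  have h5 := H_succ 4
  norm_num at h5
  rw [h5, H_four]; norm_num

noncomputable def sfF (n : ℕ) : ℝ :=
  10/3 * (n : ℝ)^2 - 44/5 * ((n : ℝ) + 1) * H n + 354/25 * (n : ℝ) + 2/75

lemma sfS_rec6 (k : ℕ) : sfS (k + 6) = ((k : ℝ) + 6) * Psf (k + 6)
    + 6 / (((k : ℝ) + 6) * ((k : ℝ) + 5)) * sfG (k + 4) := by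
  have h := sfS_rec' (k + 4)
  rw [show k + 4 + 2 = k + 6 from by omega] at h
  rw [h]; push_cast; ring

lemma sfS_rec5 (k : ℕ) : sfS (k + 5) = ((k : ℝ) + 5) * Psf (k + 5)
    + 6 / (((k : ℝ) + 5) * ((k : ℝ) + 4)) * sfG (k + 3) := by
  have h := sfS_rec' (k + 3)
  rw [show k + 3 + 2 = k + 5 from by omega] at h
  rw [h]; push_cast; ring

lemma sfS_rec4 (k : ℕ) : sfS (k + 4) = ((k : ℝ) + 4) * Psf (k + 4)
    + 6 / (((k : ℝ) + 4) * ((k : ℝ) + 3)) * sfG (k + 2) := by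
  have h := sfS_rec' (k + 2)
  rw [show k + 2 + 2 = k + 4 from by omega] at h
  rw [h]; push_cast; ring

lemma sfS_closed : ∀ n, 4 ≤ n → sfS n = sfF n := by
  intro n
  induction n using Nat.strong_induction_on with
  | _ n ih =>
    intro hn
    by_cases h4 : n = 4
    · subst h4
      rw [sfS_four, sfF, H_four]; norm_num
    by_cases h5 : n = 5
    · subst h5
      rw [sfS_five, sfF, H_five]; norm_num
    obtain ⟨k, rfl⟩ : ∃ k, n = k + 6 := ⟨n - 6, by omega⟩
    have ih5 : sfS (k + 5) = sfF (k + 5) := ih (k + 5) (by omega) (by omega)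
    have ih4 : sfS (k + 4) = sfF (k + 4) := ih (k + 4) (by omega) (by omega)
    have c3 : ((k : ℝ) + 3) ≠ 0 := by positivity
    have c4 : ((k : ℝ) + 4) ≠ 0 := by positivity
    have c5 : ((k : ℝ) + 5) ≠ 0 := by positivity
    have c6 : ((k : ℝ) + 6) ≠ 0 := by positivity
    have hG3 : sfG (k + 3) = (((k : ℝ) + 5) * ((k : ℝ) + 4)) / 6
        * (sfS (k + 5) - ((k : ℝ) + 5) * Psf (k + 5)) := by
      rw [sfS_rec5 k]; field_simp; ring
    have hG2 : sfG (k + 2) = (((k : ℝ) + 4) * ((k : ℝ) + 3)) / 6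
        * (sfS (k + 4) - ((k : ℝ) + 4) * Psf (k + 4)) := by
      rw [sfS_rec4 k]; field_simp; ring
    have hdd : sfG (k + 4) = 2 * sfG (k + 3) - sfG (k + 2) + sfS (k + 4) := by
      have h := sfG_dd (k + 2)
      rw [show k + 2 + 2 = k + 4 from by omega, show k + 2 + 1 = k + 3 from by omega] at h
      exact h
    have hP6 : Psf (k + 6) = 5/3 * ((k : ℝ) + 6) - 7/3 := by
      rw [Psf, if_neg (by omega)]; push_cast; ring
    have hP5 : Psf (k + 5) = 5/3 * ((k : ℝ) + 5) - 7/3 := by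
      rw [Psf, if_neg (by omega)]; push_cast; ring
    have hP4 : Psf (k + 4) = 5/3 * ((k : ℝ) + 4) - 7/3 := by
      rw [Psf, if_neg (by omega)]; push_cast; ring
    have hH5 : H (k + 5) = H (k + 4) + 1 / ((k : ℝ) + 5) := by
      have h := H_succ (k + 4)
      rw [show k + 4 + 1 = k + 5 from by omega] at h
      rw [h]; push_cast; ring
    have hH6 : H (k + 6) = H (k + 4) + 1 / ((k : ℝ) + 5) + 1 / ((k : ℝ) + 6) := by
      have h := H_succ (k + 5)
      rw [show k + 5 + 1 = k + 6 from by omega] at h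
      rw [h, hH5]; push_cast; ring
    rw [sfS_rec6 k, hdd, hG3, hG2, ih5, ih4]
    simp only [sfF]
    rw [hP6, hP5, hP4, hH6, hH5]
    push_cast
    field_simp
    ring

/-- Exact grand average for "smaller pivot first": for `n ≥ 4`,
`C̄(n) = (10/3)n − (44/5)H_n + 354/25 − (44/5)H_n/n + 2/(75n)`. -/
theorem spf_grand_average_exact (n : ℕ) (hn : 4 ≤ n) :
    (1 / (n : ℝ)) * ∑ j ∈ Finset.Icc (1 : ℤ) (n : ℤ), qsCost Psf n j =
      10 / 3 * (n : ℝ) - 44 / 5 * H n + 354 / 25 - 44 / 5 * H n / (n : ℝ)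
        + 2 / (75 * (n : ℝ)) := by
  have hS : (∑ j ∈ Finset.Icc (1 : ℤ) (n : ℤ), qsCost Psf n j) = sfS n := rfl
  have hn0 : (n : ℝ) ≠ 0 := by positivity
  rw [hS, sfS_closed n hn, sfF]
  field_simp
  ring
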